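/- arXiv:0806.3834 — 3 statements merged into one kernel-verified Lean document; each statement's English description precedes it below -/
import Mathlib

section
/- If (x,y,z) ∈ ℝ³ stabilizes |ψ⟩ ∈ ℂ², then (z, −(x+y)/√2, (x−y)/√2) stabilizes HT|ψ⟩, where H is the Hadamard matrix and T the π/8 gate. -/
/-!
Conjugation by `HT` rotates the Pauli matrices: `T` turns the `X`–`Y` plane by `π/4`
(`T X = ((X + Y)/√2) T`, `T Y = ((Y - X)/√2) T`, `T Z = Z T`), and `H` exchanges `X` and `Z`
and negates `Y`. Hence `(z X - (x+y)/√2 Y + (x-y)/√2 Z) · HT = HT · (x X + y Y + z Z)`, and an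
intertwiner carries `+1`-eigenvectors of one operator to `+1`-eigenvectors of the other.
-/

open Matrix

noncomputable section

abbrev Mat := Matrix (Fin 2) (Fin 2) ℂ

/-- The Hadamard gate. -/
def Hg : Mat := ((Real.sqrt 2)⁻¹ : ℝ) • !![1, 1; 1, -1]

/-- The phase gate. -/
def Pg : Mat := !![1, 0; 0, Complex.I]

/-- The π/8 gate. -/
def Tg : Mat := !![1, 0; 0, Complex.exp ((Real.pi / 4 : ℝ) * Complex.I)]

/-- The Pauli matrices. -/
def Xg : Mat := !![0, 1; 1, 0]
def Yg : Mat := !![0, -Complex.I; Complex.I, 0]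
def Zg : Mat := !![1, 0; 0, -1]

/-- (x,y,z) stabilizes v iff (xX+yY+zZ)v = v. -/
def Stabilizes (x y z : ℝ) (v : Fin 2 → ℂ) : Prop :=
  ((x : ℂ) • Xg + (y : ℂ) • Yg + (z : ℂ) • Zg).mulVec v = v

theorem mulVec_mulVec_eq_of_mul_eq_mul {n R : Type*} [Fintype n] [CommSemiring R]
    {A B U : Matrix n n R} {v : n → R} (hU : B * U = U * A) (hv : A *ᵥ v = v) :
    B *ᵥ (U *ᵥ v) = U *ᵥ v := by
  rw [mulVec_mulVec, hU, ← mulVec_mulVec, hv]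

lemma ofReal_sqrt_two_sq : (Real.sqrt 2 : ℂ) ^ 2 = 2 := by
  exact_mod_cast Real.sq_sqrt zero_le_two

lemma exp_pi_div_four_mul_I :
    Complex.exp ((Real.pi / 4 : ℝ) * Complex.I) = (Real.sqrt 2 : ℂ)⁻¹ * (1 + Complex.I) := by
  rw [Complex.exp_mul_I, ← Complex.ofReal_cos, ← Complex.ofReal_sin, Real.cos_pi_div_four,
    Real.sin_pi_div_four]
  field_simp
  push_cast
  linear_combination ((1 + Complex.I) / 2) * ofReal_sqrt_two_sq

lemma Tg_eq : Tg = !![1, 0; 0, (Real.sqrt 2 : ℂ)⁻¹ * (1 + Complex.I)] := by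
  rw [Tg, exp_pi_div_four_mul_I]

lemma Tg_mul_Xg : Tg * Xg = ((Real.sqrt 2 : ℂ)⁻¹ • (Xg + Yg)) * Tg := by
  rw [Tg_eq]
  ext i j
  fin_cases i <;> fin_cases j <;> simp [Xg, Yg, Matrix.mul_apply]
  field_simp
  linear_combination ofReal_sqrt_two_sq + Complex.I_sq

lemma Tg_mul_Yg : Tg * Yg = ((Real.sqrt 2 : ℂ)⁻¹ • (Yg - Xg)) * Tg := by
  rw [Tg_eq]
  ext i j
  fin_cases i <;> fin_cases j <;> simp [Xg, Yg, Matrix.mul_apply]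
  · field_simp
    linear_combination -Complex.I * ofReal_sqrt_two_sq + Complex.I_sq
  · linear_combination (Real.sqrt 2 : ℂ)⁻¹ * Complex.I_sq

lemma Tg_mul_Zg : Tg * Zg = Zg * Tg := by
  ext i j
  fin_cases i <;> fin_cases j <;> simp [Tg, Zg]

lemma Hg_mul_Xg : Hg * Xg = Zg * Hg := by
  ext i j
  fin_cases i <;> fin_cases j <;> simp [Hg, Xg, Zg]

lemma Hg_mul_Yg : Hg * Yg = -(Yg * Hg) := by
  ext i j
  fin_cases i <;> fin_cases j <;> simp [Hg, Yg] <;> ring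

lemma Hg_mul_Zg : Hg * Zg = Xg * Hg := by
  ext i j
  fin_cases i <;> fin_cases j <;> simp [Hg, Xg, Zg]

lemma Hg_mul_Tg_mul_Xg : Hg * Tg * Xg = ((Real.sqrt 2 : ℂ)⁻¹ • (Zg - Yg)) * (Hg * Tg) := by
  rw [mul_assoc, Tg_mul_Xg, smul_mul_assoc, mul_smul_comm, ← mul_assoc, mul_add, Hg_mul_Xg,
    Hg_mul_Yg, smul_mul_assoc]
  noncomm_ring

lemma Hg_mul_Tg_mul_Yg : Hg * Tg * Yg = ((Real.sqrt 2 : ℂ)⁻¹ • -(Yg + Zg)) * (Hg * Tg) := by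
  rw [mul_assoc, Tg_mul_Yg, smul_mul_assoc, mul_smul_comm, ← mul_assoc, mul_sub, Hg_mul_Xg,
    Hg_mul_Yg, smul_mul_assoc]
  noncomm_ring

lemma Hg_mul_Tg_mul_Zg : Hg * Tg * Zg = Xg * (Hg * Tg) := by
  rw [mul_assoc, Tg_mul_Zg, ← mul_assoc, Hg_mul_Zg, mul_assoc]

lemma pauli_mul_Hg_mul_Tg (x y z : ℝ) :
    ((z : ℂ) • Xg + ((-((x + y) / Real.sqrt 2) : ℝ) : ℂ) • Yg
      + (((x - y) / Real.sqrt 2 : ℝ) : ℂ) • Zg) * (Hg * Tg)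
    = (Hg * Tg) * ((x : ℂ) • Xg + (y : ℂ) • Yg + (z : ℂ) • Zg) := by
  simp only [Matrix.mul_add, Matrix.mul_smul, ← mul_assoc, Hg_mul_Tg_mul_Xg, Hg_mul_Tg_mul_Yg,
    Hg_mul_Tg_mul_Zg]
  simp only [smul_mul_assoc, Matrix.add_mul, Matrix.sub_mul, Matrix.neg_mul]
  push_cast
  module

/-- If (x,y,z) stabilizes |ψ⟩ then (z, −(x+y)/√2, (x−y)/√2) stabilizes HT|ψ⟩. -/
theorem stabilizer_transition_HT (x y z : ℝ) (ψ : Fin 2 → ℂ)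
    (h : Stabilizes x y z ψ) :
    Stabilizes z (-((x + y) / Real.sqrt 2)) ((x - y) / Real.sqrt 2)
      ((Hg * Tg).mulVec ψ) :=
  mulVec_mulVec_eq_of_mul_eq_mul (pauli_mul_Hg_mul_Tg x y z) h
end
end

section
/- Every matrix in the group ⟨H, P, T⟩ generated by the Hadamard, phase, and π/8 gates can be written in normal form: as W_n·T·W_{n-1}·T···T·W₁·T·W₀ for some n ≥ 0, where W_n ∈ {I, H, PH}, W_i ∈ {H, PH} for 1 ≤ i ≤ n−1, and W₀ is in the Clifford group C₁. -/
open Matrix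

noncomputable section

/-- The set of matrices computed by circuits over {H, P}: the Clifford group C₁. -/
def C1 : Set Mat := Submonoid.closure ({Hg, Pg} : Set Mat)

/-- The matrix Wₙ·T·Wₙ₋₁·T···W₁·T·W₀ where ws = [Wₙ, …, W₁] (the number of
T-factors is the length of ws; for ws = [] the product is just W₀). -/
def nfProd (ws : List Mat) (W0 : Mat) : Mat :=
  ws.foldr (fun w acc => w * Tg * acc) W0

/-- (ws, W₀) is a normal form: the leading factor Wₙ is in {I, H, PH}, the
intermediate factors are in {H, PH}, and W₀ is in the Clifford group. -/
def IsNF (ws : List Mat) (W0 : Mat) : Prop :=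
  W0 ∈ C1 ∧ (∀ w ∈ ws.head?, w = 1 ∨ w = Hg ∨ w = Pg * Hg) ∧
    (∀ w ∈ ws.tail, w = Hg ∨ w = Pg * Hg)

/-!
Let `M = ⟨ω·I, X, P⟩`, `ω = e^{iπ/4}`, be the monoid of monomial Clifford operators. Then
`M·T ⊆ T·M` (`X·T = T·ω⁷XP`, and `ω·I`, `P` commute with `T`), and the Clifford monoid is
`{I, H, PH}·M`, since left multiplication by `H` or `P` maps each of these three cosets into
another. Hence every Clifford `C` satisfies `C·T = W·T·C'` with `W ∈ {I, H, PH}` and `C'` Clifford.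
Multiplying a normal form on the right by `T` therefore either appends a new syllable `W·T` (when
`W ≠ I`) or, when `W = I`, merges the new `T` into the last one, since `T² = P` is Clifford.
-/

def ω : ℂ := Complex.exp ((Real.pi / 4 : ℝ) * Complex.I)

lemma inv_sqrt_two_sq : ((Real.sqrt 2)⁻¹ : ℂ) ^ 2 = 1 / 2 := by
  rw [inv_pow, ← Complex.ofReal_pow, Real.sq_sqrt (by norm_num)]
  norm_num

lemma ω_eq : ω = (1 + Complex.I) * (Real.sqrt 2)⁻¹ := by
  have h : Real.sqrt 2 / 2 = (Real.sqrt 2)⁻¹ := by field_simp; norm_num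
  rw [ω, Complex.exp_mul_I, ← Complex.ofReal_cos, ← Complex.ofReal_sin,
    Real.cos_pi_div_four, Real.sin_pi_div_four, h]
  push_cast
  ring

lemma Hg_eq : Hg = ((Real.sqrt 2)⁻¹ : ℂ) • !![1, 1; 1, -1] := by
  simp [Hg, Complex.real_smul]

lemma Tg_eq_s14 : Tg = !![1, 0; 0, ω] := rfl

lemma Hg_mul_Hg : Hg * Hg = 1 := by
  rw [Hg_eq]
  ext i j
  fin_cases i <;> fin_cases j <;> simp [Matrix.mul_apply, Fin.sum_univ_two] <;>
    grind [inv_sqrt_two_sq]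

lemma Tg_mul_Tg : Tg * Tg = Pg := by
  rw [Tg_eq_s14, ω_eq]
  ext i j
  fin_cases i <;> fin_cases j <;> simp [Pg, Matrix.mul_apply, Fin.sum_univ_two]
  grind [inv_sqrt_two_sq, Complex.I_sq]

lemma commute_Pg_Tg : Commute Pg Tg := by
  rw [Commute, SemiconjBy, Tg_eq_s14]
  ext i j
  fin_cases i <;> fin_cases j <;> simp [Pg, Matrix.mul_apply, Fin.sum_univ_two, mul_comm]

lemma Xg_mul_Tg : Xg * Tg = Tg * ((ω • 1) ^ 7 * (Xg * Pg)) := by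
  rw [Tg_eq_s14, ω_eq]
  ext i j
  fin_cases i <;> fin_cases j <;> simp [smul_pow, Xg, Pg, Matrix.mul_apply, Fin.sum_univ_two] <;>
    grind [inv_sqrt_two_sq, Complex.I_sq]

lemma Xg_eq : Xg = Hg * Pg * Pg * Hg := by
  rw [Hg_eq]
  ext i j
  fin_cases i <;> fin_cases j <;> simp [Xg, Pg, Matrix.mul_apply, Fin.sum_univ_two] <;>
    grind [inv_sqrt_two_sq, Complex.I_sq]

lemma ω_smul_one_eq : ω • (1 : Mat) = (Hg * Pg) ^ 3 := by
  rw [Hg_eq, ω_eq]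
  ext i j
  fin_cases i <;> fin_cases j <;> simp [pow_succ, Pg, Matrix.mul_apply, Fin.sum_univ_two] <;>
    grind [inv_sqrt_two_sq, Complex.I_sq]

lemma Pg_mul_Pg_mul_Hg : Pg * (Pg * Hg) = Hg * Xg := by
  rw [Hg_eq]
  ext i j
  fin_cases i <;> fin_cases j <;> simp [Xg, Pg, Matrix.mul_apply, Fin.sum_univ_two] <;>
    grind [Complex.I_sq]

lemma Hg_mul_Pg_mul_Hg : Hg * (Pg * Hg) = Pg * Hg * (ω • 1 * (Xg * Pg ^ 3)) := by
  rw [Hg_eq, ω_eq]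
  ext i j
  fin_cases i <;> fin_cases j <;>
    simp [pow_succ, Xg, Pg, Matrix.mul_apply, Fin.sum_univ_two] <;>
    grind [inv_sqrt_two_sq, Complex.I_sq]

section Monoid

variable {G : Type*} [Monoid G]

theorem exists_mul_eq_mul_of_mem_closure {s : Set G} {t : G}
    (hs : ∀ x ∈ s, ∃ y ∈ Submonoid.closure s, x * t = t * y) {k : G}
    (hk : k ∈ Submonoid.closure s) : ∃ k' ∈ Submonoid.closure s, k * t = t * k' := by
  induction hk using Submonoid.closure_induction with
  | mem x hx => exact hs x hx
  | one => exact ⟨1, one_mem _, by rw [one_mul, mul_one]⟩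
  | mul x y _ _ ihx ihy =>
    obtain ⟨x', hx', hxt⟩ := ihx
    obtain ⟨y', hy', hyt⟩ := ihy
    exact ⟨x' * y', mul_mem hx' hy', by rw [mul_assoc, hyt, ← mul_assoc, hxt, mul_assoc]⟩

open scoped Pointwise in
theorem closure_subset_mul_of_mul_subset {s R : Set G} {M : Submonoid G} (hR : (1 : G) ∈ R)
    (h : s * R ⊆ R * M) : (Submonoid.closure s : Set G) ⊆ R * M := by
  intro x hx
  induction hx using Submonoid.closure_induction_left with
  | one => exact Set.mem_mul.2 ⟨1, hR, 1, one_mem M, mul_one 1⟩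
  | mul_left g hg y _ ih =>
    obtain ⟨W, hW, k, hk, rfl⟩ := Set.mem_mul.1 ih
    obtain ⟨W', hW', k', hk', hgW⟩ := Set.mem_mul.1 (h (Set.mul_mem_mul hg hW))
    exact Set.mem_mul.2 ⟨W', hW', k' * k, mul_mem hk' hk, by rw [← mul_assoc, hgW, mul_assoc]⟩

end Monoid

def cliffordSubmonoid : Submonoid Mat := Submonoid.closure {Hg, Pg}

def monomialClifford : Submonoid Mat := Submonoid.closure {ω • 1, Xg, Pg}

def cliffordCosetReps : Set Mat := {1, Hg, Pg * Hg}

lemma Hg_mem_clifford : Hg ∈ cliffordSubmonoid := Submonoid.subset_closure (by simp)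

lemma Pg_mem_clifford : Pg ∈ cliffordSubmonoid := Submonoid.subset_closure (by simp)

lemma cliffordCosetReps_subset : cliffordCosetReps ⊆ cliffordSubmonoid := by
  rintro W (rfl | rfl | rfl)
  exacts [one_mem _, Hg_mem_clifford, mul_mem Pg_mem_clifford Hg_mem_clifford]

lemma monomialClifford_le_clifford : monomialClifford ≤ cliffordSubmonoid := by
  rw [monomialClifford, Submonoid.closure_le]
  rintro x (rfl | rfl | rfl)
  · rw [ω_smul_one_eq]
    exact pow_mem (mul_mem Hg_mem_clifford Pg_mem_clifford) 3
  · rw [Xg_eq]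
    exact mul_mem (mul_mem (mul_mem Hg_mem_clifford Pg_mem_clifford) Pg_mem_clifford)
      Hg_mem_clifford
  · exact Pg_mem_clifford

lemma exists_monomialClifford_mul_Tg {k : Mat} (hk : k ∈ monomialClifford) :
    ∃ k' ∈ monomialClifford, k * Tg = Tg * k' := by
  have gen {x : Mat} (hx : x ∈ ({ω • 1, Xg, Pg} : Set Mat)) : x ∈ monomialClifford :=
    Submonoid.subset_closure hx
  refine exists_mul_eq_mul_of_mem_closure ?_ hk
  rintro x (rfl | rfl | rfl)
  · exact ⟨ω • 1, gen (by simp), by rw [smul_one_mul, mul_smul_one]⟩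
  · exact ⟨_, mul_mem (pow_mem (gen (by simp)) 7) (mul_mem (gen (by simp)) (gen (by simp))),
      Xg_mul_Tg⟩
  · exact ⟨Pg, gen (by simp), commute_Pg_Tg.eq⟩

open scoped Pointwise in
lemma clifford_subset_cosetReps_mul :
    (cliffordSubmonoid : Set Mat) ⊆ cliffordCosetReps * monomialClifford := by
  have gen {x : Mat} (hx : x ∈ ({ω • 1, Xg, Pg} : Set Mat)) : x ∈ monomialClifford :=
    Submonoid.subset_closure hx
  refine closure_subset_mul_of_mul_subset (Set.mem_insert 1 _) ?_
  rintro _ ⟨g, hg, W, hW, rfl⟩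
  rcases hg with rfl | rfl <;> rcases hW with rfl | rfl | rfl
  · exact ⟨Hg, by simp [cliffordCosetReps], 1, one_mem _, by simp⟩
  · exact ⟨1, by simp [cliffordCosetReps], 1, one_mem _, by simp [Hg_mul_Hg]⟩
  · exact ⟨Pg * Hg, by simp [cliffordCosetReps], _, mul_mem (gen (by simp))
      (mul_mem (gen (by simp)) (pow_mem (gen (by simp)) 3)), Hg_mul_Pg_mul_Hg.symm⟩
  · exact ⟨1, by simp [cliffordCosetReps], Pg, gen (by simp), by simp⟩
  · exact ⟨Pg * Hg, by simp [cliffordCosetReps], 1, one_mem _, by simp⟩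
  · exact ⟨Hg, by simp [cliffordCosetReps], Xg, gen (by simp), Pg_mul_Pg_mul_Hg.symm⟩

lemma exists_clifford_mul_Tg {C : Mat} (hC : C ∈ cliffordSubmonoid) :
    ∃ W ∈ cliffordCosetReps, ∃ C' ∈ cliffordSubmonoid, C * Tg = W * Tg * C' := by
  obtain ⟨W, hW, k, hk, rfl⟩ := clifford_subset_cosetReps_mul hC
  obtain ⟨k', hk', hkT⟩ := exists_monomialClifford_mul_Tg hk
  exact ⟨W, hW, k', monomialClifford_le_clifford hk', by rw [mul_assoc, hkT, mul_assoc]⟩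

lemma nfProd_mul (ws : List Mat) (A B : Mat) : nfProd ws (A * B) = nfProd ws A * B := by
  induction ws with
  | nil => rfl
  | cons w ws ih => simp only [nfProd, List.foldr_cons] at ih ⊢; rw [ih, ← mul_assoc]

lemma nfProd_append_singleton (ws : List Mat) (W W0 : Mat) :
    nfProd (ws ++ [W]) W0 = nfProd ws (W * Tg * W0) := by
  simp [nfProd]

lemma IsNF.mul_clifford {ws : List Mat} {W0 C : Mat} (h : IsNF ws W0)
    (hC : C ∈ cliffordSubmonoid) : IsNF ws (W0 * C) :=
  ⟨mul_mem (show W0 ∈ cliffordSubmonoid from h.1) hC, h.2⟩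

lemma IsNF.append_singleton {ws : List Mat} {W0 W C : Mat} (h : IsNF ws W0)
    (hW : W = Hg ∨ W = Pg * Hg) (hC : C ∈ cliffordSubmonoid) : IsNF (ws ++ [W]) C := by
  obtain ⟨-, hhead, htail⟩ := h
  rcases ws with _ | ⟨w, ws⟩
  · exact ⟨hC, by simpa using Or.inr hW, by simp⟩
  · refine ⟨hC, by simpa using hhead, ?_⟩
    simp only [List.cons_append, List.tail_cons, List.mem_append, List.mem_singleton]
    rintro v (hv | rfl)
    exacts [htail v hv, hW]

lemma IsNF.of_append_singleton {ws : List Mat} {W0 w C : Mat} (h : IsNF (ws ++ [w]) W0)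
    (hC : C ∈ cliffordSubmonoid) : IsNF ws (w * C) := by
  obtain ⟨-, hhead, htail⟩ := h
  rcases ws with _ | ⟨v, ws⟩
  · exact ⟨mul_mem (cliffordCosetReps_subset (hhead w (by simp))) hC, by simp, by simp⟩
  · have hw : w ∈ cliffordCosetReps := Or.inr (htail w (by simp))
    refine ⟨mul_mem (cliffordCosetReps_subset hw) hC, by simpa using hhead, ?_⟩
    exact fun u hu => htail u (List.mem_append_left [w] hu)

def HasNormalForm (A : Mat) : Prop := ∃ ws W0, IsNF ws W0 ∧ A = nfProd ws W0

lemma HasNormalForm.mul_clifford {A C : Mat} (hA : HasNormalForm A)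
    (hC : C ∈ cliffordSubmonoid) : HasNormalForm (A * C) := by
  obtain ⟨ws, W0, hnf, rfl⟩ := hA
  exact ⟨ws, W0 * C, hnf.mul_clifford hC, (nfProd_mul ws W0 C).symm⟩

lemma HasNormalForm.mul_Tg {A : Mat} (hA : HasNormalForm A) : HasNormalForm (A * Tg) := by
  obtain ⟨ws, W0, hnf, rfl⟩ := hA
  obtain ⟨W, hW, C, hC, hW0⟩ := exists_clifford_mul_Tg hnf.1
  rw [← nfProd_mul, hW0]
  rcases hW with rfl | hW
  · rcases ws.eq_nil_or_concat' with rfl | ⟨ws, w, rfl⟩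
    · exact ⟨[1], C, ⟨hC, by simp, by simp⟩, rfl⟩
    · refine ⟨ws, w * (Pg * C), hnf.of_append_singleton (mul_mem Pg_mem_clifford hC), ?_⟩
      rw [nfProd_append_singleton, ← Tg_mul_Tg]
      simp only [one_mul, mul_assoc]
  · exact ⟨ws ++ [W], C, hnf.append_singleton hW hC, (nfProd_append_singleton ws W C).symm⟩

/-- Every matrix in ⟨H, P, T⟩ can be written in normal form. -/
theorem normal_form_exists :
    ∀ A ∈ Submonoid.closure ({Hg, Pg, Tg} : Set Mat),
      ∃ ws W0, IsNF ws W0 ∧ A = nfProd ws W0 := by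
  intro A hA
  induction hA using Submonoid.closure_induction_right with
  | one => exact ⟨[], 1, ⟨one_mem _, by simp, by simp⟩, rfl⟩
  | mul_right B g _ hg ih =>
    rcases hg with rfl | rfl | rfl
    exacts [HasNormalForm.mul_clifford ih Hg_mem_clifford,
      HasNormalForm.mul_clifford ih Pg_mem_clifford, HasNormalForm.mul_Tg ih]
end
end

section
/- No normal form circuit containing at least one T-gate computes the identity: if n ≥ 1, W_n ∈ {I, H, PH}, W_i ∈ {H, PH} for 1 ≤ i < n, and W₀ ∈ C₁, then W_n·T·W_{n-1}·T···T·W₁·T·W₀ ≠ λ·I for λ = 1 (i.e., the product is not the identity matrix). -/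
open Matrix

noncomputable section

/-!
Conjugation by a gate acts on the Bloch vector `c` of `c₀X + c₁Y + c₂Z` through a matrix
`B / √2 ^ k` with `B` over `ℤ[√2]`, where `k` counts the `T` gates: `H` and `P` give signed
permutation matrices and `T` gives `[[1,-1,0],[1,1,0],[0,0,√2]] / √2`. Reduce `B` modulo the
prime `√2`. The syllables `T`, `HT`, `PHT` have rank-one parity matrices `U` satisfying `U * V = U`
whenever `V` is the parity of `HT` or `PHT`, so a normal form with `k ≥ 1` has parity
`U * (parity of a Clifford matrix) ≠ 0`, whereas the identity has `B = √2 ^ k • 1 ≡ 0`.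
-/

open Complex

abbrev Mat3 := Matrix (Fin 3) (Fin 3) (ℤ√2)

abbrev Mat3₂ := Matrix (Fin 3) (Fin 3) (ZMod 2)

def sqrt2Emb : ℤ√2 →+* ℝ := Zsqrtd.toReal zero_le_two

lemma sqrt2Emb_injective : Function.Injective sqrt2Emb :=
  Zsqrtd.toReal_injective _ fun n h => by
    have : n ≤ 1 := by nlinarith
    have : -1 ≤ n := by nlinarith
    interval_cases n <;> omega

/-- Reduction modulo the prime `√2`. -/
def parity : ℤ√2 →+* ZMod 2 := Zsqrtd.lift ⟨0, by decide⟩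

lemma parity_sqrtd : parity Zsqrtd.sqrtd = 0 := rfl

def pauliComb (c : Fin 3 → ℝ) : Mat := c 0 • Xg + c 1 • Yg + c 2 • Zg

lemma pauliComb_eq (c : Fin 3 → ℝ) :
    pauliComb c = !![(c 2 : ℂ), c 0 - c 1 * I; c 0 + c 1 * I, -c 2] := by
  ext i j
  fin_cases i <;> fin_cases j <;> simp [pauliComb, Xg, Yg, Zg, sub_eq_add_neg, mul_comm]

lemma pauliComb_injective : Function.Injective pauliComb := by
  intro c d h
  rw [pauliComb_eq, pauliComb_eq] at h
  have h00 : (c 2 : ℂ) = d 2 := congrFun (congrFun h 0) 0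
  have h10 : (c 0 + c 1 * I : ℂ) = d 0 + d 1 * I := congrFun (congrFun h 1) 0
  ext k
  fin_cases k
  · simpa using congrArg re h10
  · simpa using congrArg im h10
  · exact_mod_cast h00

lemma pauliComb_smul (r : ℝ) (c : Fin 3 → ℝ) : pauliComb (r • c) = r • pauliComb c := by
  simp only [pauliComb, Pi.smul_apply, smul_eq_mul, mul_smul, smul_add]

/-- `S (c·σ) S⁻¹ = ((B / √2 ^ n) c)·σ` for every Bloch vector `c`, stated without inverting `S`. -/
def PauliRep (S : Mat) (B : Mat3) (n : ℕ) : Prop :=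
  ∀ c, (√2 ^ n : ℝ) • (S * pauliComb c) = pauliComb (B.map sqrt2Emb *ᵥ c) * S

lemma pauliRep_one : PauliRep 1 1 0 := fun c => by simp

lemma PauliRep.mul {U S : Mat} {C B : Mat3} {m n : ℕ} (hU : PauliRep U C m)
    (hS : PauliRep S B n) : PauliRep (U * S) (C * B) (m + n) := fun c => by
  calc (√2 ^ (m + n) : ℝ) • (U * S * pauliComb c)
      = (√2 ^ m : ℝ) • (U * ((√2 ^ n : ℝ) • (S * pauliComb c))) := by
        rw [Matrix.mul_smul, smul_smul, pow_add, Matrix.mul_assoc]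
    _ = (√2 ^ m : ℝ) • (U * pauliComb (B.map sqrt2Emb *ᵥ c)) * S := by
        rw [hS, ← Matrix.mul_assoc, Matrix.smul_mul]
    _ = pauliComb ((C * B).map sqrt2Emb *ᵥ c) * (U * S) := by
        rw [hU, Matrix.map_mul, ← Matrix.mulVec_mulVec, Matrix.mul_assoc]

lemma PauliRep.eq_diagonal_of_one {B : Mat3} {n : ℕ} (h : PauliRep 1 B n) :
    B = Matrix.diagonal fun _ => Zsqrtd.sqrtd ^ n := by
  refine Matrix.map_injective sqrt2Emb_injective <| Matrix.ext_iff_mulVec.2 fun c => ?_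
  apply pauliComb_injective
  dsimp only
  have hc : (Matrix.diagonal fun _ => sqrt2Emb Zsqrtd.sqrtd ^ n) *ᵥ c = (√2 ^ n : ℝ) • c := by
    ext i
    simp [Matrix.mulVec_diagonal, sqrt2Emb]
  rw [Matrix.diagonal_map (map_zero _), map_pow, hc, pauliComb_smul,
    ← Matrix.one_mul (pauliComb c), h c, Matrix.mul_one]

lemma PauliRep.parity_eq_zero_of_one {B : Mat3} {n : ℕ} (h : PauliRep 1 B n) (hn : n ≠ 0) :
    parity.mapMatrix B = 0 := by
  rw [h.eq_diagonal_of_one, RingHom.mapMatrix_apply, Matrix.diagonal_map (map_zero _)]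
  simp only [map_pow, parity_sqrtd, zero_pow hn]
  exact Matrix.diagonal_zero

def blochH : Mat3 := !![0, 0, 1; 0, -1, 0; 1, 0, 0]

def blochP : Mat3 := !![0, -1, 0; 1, 0, 0; 0, 0, 1]

def blochT : Mat3 := !![1, -1, 0; 1, 1, 0; 0, 0, Zsqrtd.sqrtd]

lemma pauliRep_H : PauliRep Hg blochH 0 := fun c => by
  ext i j
  fin_cases i <;> fin_cases j <;>
    simp [pauliComb_eq, blochH, Hg, Matrix.mulVec, dotProduct, Fin.sum_univ_three,
      Matrix.mul_apply, Fin.sum_univ_two] <;> ring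

lemma pauliRep_P : PauliRep Pg blochP 0 := fun c => by
  ext i j
  fin_cases i <;> fin_cases j <;>
    simp [pauliComb_eq, blochP, Pg, Matrix.mulVec, dotProduct, Fin.sum_univ_three,
      Matrix.mul_apply, Fin.sum_univ_two] <;> ring_nf <;> simp only [I_sq] <;> ring

lemma Tg_eq_s16 : Tg = !![1, 0; 0, (√2 / 2 : ℝ) * (1 + I)] := by
  rw [Tg, exp_mul_I, ← ofReal_cos, ← ofReal_sin, Real.cos_pi_div_four, Real.sin_pi_div_four]
  push_cast
  ring_nf

lemma pauliRep_T : PauliRep Tg blochT 1 := fun c => by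
  have h2 : (√2 : ℂ) ^ 2 = 2 := by exact_mod_cast Real.sq_sqrt zero_le_two
  ext i j
  fin_cases i <;> fin_cases j <;>
    simp [pauliComb_eq, blochT, Tg_eq_s16, Matrix.mulVec, dotProduct, Fin.sum_univ_three,
      Matrix.mul_apply, Fin.sum_univ_two, sqrt2Emb] <;> ring_nf <;> simp [h2, I_sq] <;> ring

lemma exists_pauliRep_of_mem_C1 {W : Mat} (hW : W ∈ C1) :
    ∃ M, PauliRep W M 0 ∧ IsUnit M := by
  induction hW using Submonoid.closure_induction with
  | mem w hw =>
    rcases hw with rfl | rfl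
    · exact ⟨blochH, pauliRep_H, .of_mul_eq_one blochH (by decide)⟩
    · exact ⟨blochP, pauliRep_P, .of_mul_eq_one blochPᵀ (by decide)⟩
  | one => exact ⟨1, pauliRep_one, isUnit_one⟩
  | mul a b _ _ ha hb =>
    obtain ⟨Ma, ha, hMa⟩ := ha
    obtain ⟨Mb, hb, hMb⟩ := hb
    exact ⟨Ma * Mb, ha.mul hb, hMa.mul hMb⟩

def parityT : Mat3₂ := !![1, 1, 0; 1, 1, 0; 0, 0, 0]

def parityHT : Mat3₂ := !![0, 0, 0; 1, 1, 0; 1, 1, 0]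

def parityPHT : Mat3₂ := !![1, 1, 0; 0, 0, 0; 1, 1, 0]

def headParities : Set Mat3₂ := {parityT, parityHT, parityPHT}

def tailParities : Set Mat3₂ := {1, parityHT, parityPHT}

lemma mul_eq_self_of_mem_tailParities {U X : Mat3₂} (hU : U ∈ headParities)
    (hX : X ∈ tailParities) : U * X = U := by
  rcases hU with rfl | rfl | rfl <;> rcases hX with rfl | rfl | rfl <;> decide

lemma ne_zero_of_mem_headParities {U : Mat3₂} (hU : U ∈ headParities) : U ≠ 0 := by
  rcases hU with rfl | rfl | rfl <;> decide

lemma exists_pauliRep_syllable {w : Mat} (hw : w = Hg ∨ w = Pg * Hg) :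
    ∃ A, PauliRep (w * Tg) A 1 ∧ parity.mapMatrix A ∈ headParities ∩ tailParities := by
  rcases hw with rfl | rfl
  · refine ⟨blochH * blochT, pauliRep_H.mul pauliRep_T, ?_, ?_⟩ <;>
      exact Or.inr (Or.inl (by decide))
  · refine ⟨blochP * blochH * blochT, (pauliRep_P.mul pauliRep_H).mul pauliRep_T, ?_, ?_⟩ <;>
      exact Or.inr (Or.inr (by decide))

lemma exists_pauliRep_head {w : Mat} (hw : w = 1 ∨ w = Hg ∨ w = Pg * Hg) :
    ∃ A, PauliRep (w * Tg) A 1 ∧ parity.mapMatrix A ∈ headParities := by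
  rcases hw with rfl | hw
  · exact ⟨blochT, by simpa using pauliRep_T, Or.inl (by decide)⟩
  · obtain ⟨A, hA, hAh, -⟩ := exists_pauliRep_syllable hw
    exact ⟨A, hA, hAh⟩

lemma exists_pauliRep_nfProd_of_forall {W0 : Mat} {M0 : Mat3} (h0 : PauliRep W0 M0 0)
    {ws : List Mat} (hws : ∀ w ∈ ws, w = Hg ∨ w = Pg * Hg) :
    ∃ B, PauliRep (nfProd ws W0) B ws.length ∧
      ∃ X ∈ tailParities, parity.mapMatrix B = X * parity.mapMatrix M0 := by
  induction ws with
  | nil => exact ⟨M0, h0, 1, Or.inl rfl, (one_mul _).symm⟩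
  | cons w ws ih =>
    obtain ⟨B, hB, X, hX, hBX⟩ := ih fun v hv => hws v (List.mem_cons_of_mem w hv)
    obtain ⟨A, hA, hAh, hAt⟩ := exists_pauliRep_syllable (hws w List.mem_cons_self)
    refine ⟨A * B, ?_, parity.mapMatrix A, hAt, ?_⟩
    · rw [List.length_cons, add_comm]
      exact hA.mul hB
    · rw [map_mul, hBX, ← mul_assoc, mul_eq_self_of_mem_tailParities hAh hX]

lemma exists_pauliRep_nfProd {ws : List Mat} {W0 : Mat} (hW : IsNF ws W0) (hne : ws ≠ []) :
    ∃ B, PauliRep (nfProd ws W0) B ws.length ∧ parity.mapMatrix B ≠ 0 := by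
  obtain ⟨hW0, hhead, htail⟩ := hW
  obtain ⟨M0, h0, hM0⟩ := exists_pauliRep_of_mem_C1 hW0
  obtain _ | ⟨w, ws⟩ := ws
  · exact absurd rfl hne
  obtain ⟨B, hB, X, hX, hBX⟩ := exists_pauliRep_nfProd_of_forall h0 htail
  obtain ⟨A, hA, hAh⟩ := exists_pauliRep_head (hhead w rfl)
  refine ⟨A * B, ?_, ?_⟩
  · rw [List.length_cons, add_comm]
    exact hA.mul hB
  · rw [map_mul, hBX, ← mul_assoc, mul_eq_self_of_mem_tailParities hAh hX, Ne,
      (hM0.map _).mul_left_eq_zero]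
    exact ne_zero_of_mem_headParities hAh

/-- No normal form with at least one T-gate computes the identity. -/
theorem normal_form_ne_identity (ws : List Mat) (W0 : Mat)
    (hW : IsNF ws W0) (hne : ws ≠ []) :
    nfProd ws W0 ≠ 1 := by
  intro h
  obtain ⟨B, hB, hB0⟩ := exists_pauliRep_nfProd hW hne
  rw [h] at hB
  exact hB0 (hB.parity_eq_zero_of_one (List.length_pos_iff.mpr hne).ne')
end
end
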